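/- arXiv:2103.04149 — 3 statements merged into one kernel-verified Lean document; each statement's English description precedes it below -/
import Mathlib

section
/- If A, B ∈ V_n, then the product AB lies in S_n. -/
open Matrix Finset

/-- An `n × n` real matrix has the constant sum property (is of type S) if there is a
weight `w` such that every row sum and every column sum equals `n * w`. -/
def IsTypeS {n : ℕ} (M : Matrix (Fin n) (Fin n) ℝ) : Prop :=
  ∃ w : ℝ, (∀ i, ∑ j, M i j = n * w) ∧ (∀ j, ∑ i, M i j = n * w)

/-- An `n × n` real matrix has the vertex cross sum property (is of type V) if
`M i j + M k l = M i l + M k j` for all indices and all entries sum to zero. -/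
def IsTypeV {n : ℕ} (M : Matrix (Fin n) (Fin n) ℝ) : Prop :=
  (∀ i j k l, M i j + M k l = M i l + M k j) ∧ (∑ i, ∑ j, M i j = 0)

/-!
Under the vertex cross sum property any two rows of `M` differ by a constant vector, so
`M *ᵥ v` is constant whenever the entries of `v` sum to zero (dually for `v ᵥ* M`). The row sums
of `A * B` are `A *ᵥ (B *ᵥ 1)`, and the entries of `B *ᵥ 1` add up to the total sum of `B`,
which is zero; likewise for the column sums. Constant row sums and constant column sums of a
square matrix then coincide, both being the total sum divided by `n`.
-/

namespace Matrix

variable {m n R : Type*} [CommRing R]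

def HasVertexCrossSum (M : Matrix m n R) : Prop :=
  ∀ i j k l, M i j + M k l = M i l + M k j

theorem HasVertexCrossSum.transpose {M : Matrix m n R} (h : M.HasVertexCrossSum) :
    Mᵀ.HasVertexCrossSum :=
  fun i j k l => (h j i l k).trans (add_comm _ _)

theorem HasVertexCrossSum.mulVec_apply [Fintype n] {M : Matrix m n R}
    (h : M.HasVertexCrossSum) (v : n → R) (i i' : m) (j : n) :
    (M *ᵥ v) i = (M *ᵥ v) i' + (M i j - M i' j) * ∑ k, v k := by
  simp only [mulVec, dotProduct, mul_sum, ← sum_add_distrib]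
  exact sum_congr rfl fun k _ => by linear_combination v k * h i k i' j

theorem HasVertexCrossSum.vecMul_apply [Fintype m] {M : Matrix m n R}
    (h : M.HasVertexCrossSum) (v : m → R) (j j' : n) (i : m) :
    (v ᵥ* M) j = (v ᵥ* M) j' + (M i j - M i j') * ∑ k, v k := by
  simpa only [mulVec_transpose, transpose_apply] using h.transpose.mulVec_apply v j j' i

theorem mulVec_one_apply [Fintype n] (M : Matrix m n R) (i : m) :
    (M *ᵥ 1) i = ∑ j, M i j :=
  dotProduct_one _

theorem one_vecMul_apply [Fintype m] (M : Matrix m n R) (j : n) :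
    (1 ᵥ* M) j = ∑ i, M i j :=
  one_dotProduct _

end Matrix

theorem isTypeS_of_sums_eq {n : ℕ} {M : Matrix (Fin n) (Fin n) ℝ}
    (hrow : ∀ i i', ∑ j, M i j = ∑ j, M i' j) (hcol : ∀ j j', ∑ i, M i j = ∑ i, M i j') :
    IsTypeS M := by
  rcases n with _ | n
  · exact ⟨0, finZeroElim, finZeroElim⟩
  have hcard : ((n + 1 : ℕ) : ℝ) ≠ 0 := by positivity
  have htotal : ((n + 1 : ℕ) : ℝ) * ∑ j, M 0 j = (n + 1 : ℕ) * ∑ i, M i 0 :=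
    calc _ = ∑ i, ∑ j, M i j := by simp [hrow _ 0]
      _ = ∑ j, ∑ i, M i j := sum_comm
      _ = _ := by simp [hcol _ 0]
  refine ⟨(∑ j, M 0 j) / (n + 1 : ℕ), fun i => ?_, fun j => ?_⟩
  · rw [hrow i 0, mul_div_cancel₀ _ hcard]
  · rw [hcol j 0, mul_div_cancel₀ _ hcard, mul_left_cancel₀ hcard htotal]

/-- If `A, B ∈ V_n`, then `A * B ∈ S_n`. -/
theorem typeV_mul_typeV {n : ℕ} (A B : Matrix (Fin n) (Fin n) ℝ)
    (hA : IsTypeV A) (hB : IsTypeV B) : IsTypeS (A * B) := by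
  have hB1 : ∑ k, (B *ᵥ 1) k = 0 := by simpa only [mulVec_one_apply] using hB.2
  have hA1 : ∑ k, (1 ᵥ* A) k = 0 := by simpa only [one_vecMul_apply, sum_comm] using hA.2
  refine isTypeS_of_sums_eq (fun i i' => ?_) (fun j j' => ?_)
  · have hrow := HasVertexCrossSum.mulVec_apply hA.1 (B *ᵥ 1) i i' i
    rwa [hB1, mul_zero, add_zero, mulVec_mulVec, mulVec_one_apply, mulVec_one_apply] at hrow
  · have hcol := HasVertexCrossSum.vecMul_apply hB.1 (1 ᵥ* A) j j' j
    rwa [hA1, mul_zero, add_zero, vecMul_vecMul, one_vecMul_apply, one_vecMul_apply] at hcol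
end

section
/- For n ≥ 1, the subspace V_n of n×n real matrices has dimension 2n − 2, and consequently the subspace S_n has dimension n² − 2n + 2. -/
open Matrix Finset

/-- The subspace `S_n` of type S matrices. -/
def Ssub (n : ℕ) : Submodule ℝ (Matrix (Fin n) (Fin n) ℝ) where
  carrier := {M | IsTypeS M}
  add_mem' := by
    rintro A B ⟨wa, ha1, ha2⟩ ⟨wb, hb1, hb2⟩
    exact ⟨wa + wb,
      fun i => by simp only [Matrix.add_apply, Finset.sum_add_distrib, ha1 i, hb1 i]; ring,
      fun j => by simp only [Matrix.add_apply, Finset.sum_add_distrib, ha2 j, hb2 j]; ring⟩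
  zero_mem' := ⟨0, by simp, by simp⟩
  smul_mem' := by
    rintro c A ⟨w, h1, h2⟩
    exact ⟨c * w,
      fun i => by
        simp only [Matrix.smul_apply, smul_eq_mul, ← Finset.mul_sum, h1 i]; ring,
      fun j => by
        simp only [Matrix.smul_apply, smul_eq_mul, ← Finset.mul_sum, h2 j]; ring⟩

/-- The subspace `V_n` of type V matrices. -/
def Vsub (n : ℕ) : Submodule ℝ (Matrix (Fin n) (Fin n) ℝ) where
  carrier := {M | IsTypeV M}
  add_mem' := by
    rintro A B ⟨hA1, hA2⟩ ⟨hB1, hB2⟩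
    refine ⟨fun i j k l => ?_, ?_⟩
    · have h := hA1 i j k l
      have h' := hB1 i j k l
      simp only [Matrix.add_apply]
      linarith
    · simp only [Matrix.add_apply, Finset.sum_add_distrib, hA2, hB2, add_zero]
  zero_mem' := ⟨fun i j k l => by simp, by simp⟩
  smul_mem' := by
    rintro c A ⟨h1, h2⟩
    refine ⟨fun i j k l => ?_, ?_⟩
    · simp only [Matrix.smul_apply, smul_eq_mul]
      rw [← mul_add, ← mul_add, h1 i j k l]
    · simp only [Matrix.smul_apply, smul_eq_mul, ← Finset.mul_sum, h2, mul_zero]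


/-! Write `r`, `c`, `T` for the row sums, column sums and total of `M`. Summing the cross relation
`M i j + M k l = M i l + M k j` over `k, l` gives `n² M i j + T = n (r i + c j)`, so the map
`M ↦ (r i + c j) / n - 2 T / n²` fixes `V_n`; it also kills `S_n`, and `M` minus its image lies in
`S_n`. Hence it is the projection onto `V_n` along `S_n`, and `dim S_n = n² - dim V_n`. Its values
are the matrices `a i + b j` with `∑ a = ∑ b = 0`, and such `(a, b)` is determined by the matrix,
so `dim V_n = 2 (n - 1)`. -/

open Module

def coordSum (ι : Type*) [Fintype ι] : Dual ℝ (ι → ℝ) where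
  toFun v := ∑ i, v i
  map_add' _ _ := Finset.sum_add_distrib
  map_smul' c _ := (Finset.mul_sum _ _ c).symm

theorem finrank_ker_coordSum_add_one (ι : Type*) [Fintype ι] [Nonempty ι] :
    finrank ℝ (LinearMap.ker (coordSum ι)) + 1 = Fintype.card ι := by
  classical
  have hne : coordSum ι ≠ 0 := fun h => by
    simpa [coordSum] using LinearMap.congr_fun h (Pi.single (Classical.arbitrary ι) 1)
  rw [Dual.finrank_ker_add_one_of_ne_zero hne, finrank_fintype_fun_eq_card]

def outerSum {ι κ R : Type*} [Semiring R] : ((ι → R) × (κ → R)) →ₗ[R] Matrix ι κ R where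
  toFun p := Matrix.of fun i j => p.1 i + p.2 j
  map_add' p q := by ext; simp [add_add_add_comm]
  map_smul' c p := by ext; simp [mul_add]

@[simp]
theorem outerSum_apply {ι κ R : Type*} [Semiring R] (a : ι → R) (b : κ → R) (i : ι) (j : κ) :
    outerSum (a, b) i j = a i + b j := rfl

def zeroSumOuterSum (ι κ : Type*) [Fintype ι] [Fintype κ] :
    (LinearMap.ker (coordSum ι) × LinearMap.ker (coordSum κ)) →ₗ[ℝ] Matrix ι κ ℝ :=
  outerSum ∘ₗ (LinearMap.ker _).subtype.prodMap (LinearMap.ker _).subtype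

theorem zeroSumOuterSum_injective (ι κ : Type*) [Fintype ι] [Fintype κ] [Nonempty ι]
    [Nonempty κ] : Function.Injective (zeroSumOuterSum ι κ) := by
  rw [injective_iff_map_eq_zero]
  rintro ⟨⟨a, ha⟩, ⟨b, hb⟩⟩ h
  have hab : ∀ i j, a i + b j = 0 := fun i j => congr_fun (congr_fun h i) j
  have hsum_a : ∑ i, a i = 0 := ha
  have hsum_b : ∑ j, b j = 0 := hb
  have ha0 : a = 0 := funext fun i => by
    have h := Finset.sum_eq_zero (s := univ) fun j _ => hab i j
    simpa [sum_add_distrib, hsum_b] using h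
  have hb0 : b = 0 := funext fun j => by
    have h := Finset.sum_eq_zero (s := univ) fun i _ => hab i j
    simpa [sum_add_distrib, hsum_a] using h
  subst ha0 hb0
  rfl

theorem card_mul_card_mul_apply_add_sum_eq_of_cross {ι κ R : Type*} [Fintype ι] [Fintype κ]
    [CommSemiring R] {M : Matrix ι κ R} (hM : ∀ i j k l, M i j + M k l = M i l + M k j)
    (i : ι) (j : κ) :
    Fintype.card ι * Fintype.card κ * M i j + ∑ k, ∑ l, M k l =
      Fintype.card ι * ∑ l, M i l + Fintype.card κ * ∑ k, M k j := by
  calc _ = ∑ k, ∑ l, (M i j + M k l) := by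
        simp [sum_add_distrib, mul_assoc]
    _ = ∑ k, ∑ l, (M i l + M k j) := by simp only [hM i j]
    _ = _ := by simp [sum_add_distrib, mul_sum]

section

variable {n : ℕ}

theorem zeroSumOuterSum_mem_Vsub
    (p : LinearMap.ker (coordSum (Fin n)) × LinearMap.ker (coordSum (Fin n))) :
    zeroSumOuterSum (Fin n) (Fin n) p ∈ Vsub n := by
  obtain ⟨⟨a, ha⟩, ⟨b, hb⟩⟩ := p
  have hsum_a : ∑ i, a i = 0 := ha
  have hsum_b : ∑ j, b j = 0 := hb
  refine ⟨fun i j k l => ?_, ?_⟩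
  · change a i + b j + (a k + b l) = a i + b l + (a k + b j)
    ring
  · change ∑ i, ∑ j, (a i + b j) = 0
    simp [sum_add_distrib, hsum_a, hsum_b, ← mul_sum]

noncomputable def rowPart (M : Matrix (Fin n) (Fin n) ℝ) : Fin n → ℝ :=
  fun i => (∑ j, M i j) / n - (∑ k, ∑ l, M k l) / n ^ 2

variable [NeZero n]

theorem rowPart_mem_ker_coordSum (M : Matrix (Fin n) (Fin n) ℝ) :
    rowPart M ∈ LinearMap.ker (coordSum (Fin n)) := by
  have hn : (n : ℝ) ≠ 0 := NeZero.ne _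
  change ∑ i, rowPart M i = 0
  simp only [rowPart, sum_sub_distrib, ← sum_div, sum_const, card_univ, Fintype.card_fin,
    nsmul_eq_mul]
  field_simp
  ring

noncomputable def vComponent (M : Matrix (Fin n) (Fin n) ℝ) : Matrix (Fin n) (Fin n) ℝ :=
  zeroSumOuterSum (Fin n) (Fin n)
    (⟨rowPart M, rowPart_mem_ker_coordSum M⟩, ⟨rowPart Mᵀ, rowPart_mem_ker_coordSum Mᵀ⟩)

theorem vComponent_apply (M : Matrix (Fin n) (Fin n) ℝ) (i j : Fin n) :
    vComponent M i j =
      (∑ l, M i l) / n + (∑ k, M k j) / n - 2 * (∑ k, ∑ l, M k l) / n ^ 2 := by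
  have hT : ∑ k, ∑ l, Mᵀ k l = ∑ k, ∑ l, M k l := Finset.sum_comm
  change rowPart M i + rowPart Mᵀ j = _
  rw [rowPart, rowPart, hT]
  simp only [transpose_apply]
  ring

theorem sub_vComponent_mem_Ssub (M : Matrix (Fin n) (Fin n) ℝ) :
    M - vComponent M ∈ Ssub n := by
  have hn : (n : ℝ) ≠ 0 := NeZero.ne _
  have hT : ∑ l, ∑ k, M k l = ∑ k, ∑ l, M k l := Finset.sum_comm
  refine ⟨(∑ k, ∑ l, M k l) / n ^ 2, fun i => ?_, fun j => ?_⟩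
  all_goals
    simp only [Matrix.sub_apply, vComponent_apply, sum_sub_distrib, sum_add_distrib, ← sum_div,
      sum_const, card_univ, Fintype.card_fin, nsmul_eq_mul, hT]
    field_simp
    ring

theorem vComponent_eq_self {M : Matrix (Fin n) (Fin n) ℝ} (hM : M ∈ Vsub n) :
    vComponent M = M := by
  obtain ⟨hcross, htotal⟩ := hM
  have hn : (n : ℝ) ≠ 0 := NeZero.ne _
  ext i j
  have h := card_mul_card_mul_apply_add_sum_eq_of_cross hcross i j
  simp only [Fintype.card_fin, htotal] at h
  rw [vComponent_apply, htotal]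
  field_simp
  linarith

theorem vComponent_eq_zero {M : Matrix (Fin n) (Fin n) ℝ} (hM : M ∈ Ssub n) :
    vComponent M = 0 := by
  obtain ⟨w, hrow, hcol⟩ := hM
  have hn : (n : ℝ) ≠ 0 := NeZero.ne _
  ext i j
  simp only [vComponent_apply, hrow, hcol, sum_const, card_univ, Fintype.card_fin, nsmul_eq_mul,
    Matrix.zero_apply]
  field_simp
  ring

theorem isCompl_Vsub_Ssub : IsCompl (Vsub n) (Ssub n) where
  disjoint := Submodule.disjoint_def.mpr fun _ hV hS =>
    (vComponent_eq_self hV).symm.trans (vComponent_eq_zero hS)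
  codisjoint := Submodule.codisjoint_iff_exists_add_eq.mpr fun M =>
    ⟨vComponent M, M - vComponent M, zeroSumOuterSum_mem_Vsub _, sub_vComponent_mem_Ssub M,
      add_sub_cancel _ _⟩

theorem range_zeroSumOuterSum : LinearMap.range (zeroSumOuterSum (Fin n) (Fin n)) = Vsub n :=
  le_antisymm (by rintro _ ⟨p, rfl⟩; exact zeroSumOuterSum_mem_Vsub p)
    fun _ hM => ⟨_, vComponent_eq_self hM⟩

theorem finrank_Vsub_add_two : finrank ℝ (Vsub n) + 2 = 2 * n := by
  have hker := finrank_ker_coordSum_add_one (Fin n)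
  rw [Fintype.card_fin] at hker
  rw [← range_zeroSumOuterSum, LinearMap.finrank_range_of_inj (zeroSumOuterSum_injective _ _),
    finrank_prod]
  omega

end

/-- `dim V_n = 2n - 2` and `dim S_n = n² - 2n + 2`. -/
theorem dim_Vsub_and_Ssub (n : ℕ) (hn : 1 ≤ n) :
    (Module.finrank ℝ (Vsub n) : ℤ) = 2 * n - 2 ∧
    (Module.finrank ℝ (Ssub n) : ℤ) = n ^ 2 - 2 * n + 2 := by
  have : NeZero n := ⟨by omega⟩
  have hV : finrank ℝ (Vsub n) + 2 = 2 * n := finrank_Vsub_add_two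
  have hVS : finrank ℝ (Vsub n) + finrank ℝ (Ssub n) = n ^ 2 := by
    rw [Submodule.finrank_add_eq_of_isCompl isCompl_Vsub_Ssub, finrank_matrix, finrank_self,
      Fintype.card_fin, mul_one, sq]
  zify at hV hVS
  constructor <;> linarith
end

section
/- Let M be an n×n integer matrix and suppose M = N² for some n×n integer matrix N. Let N = a·1_n^T + 1_n·b^T + N_0 + (wt N)·E_n be the unique decomposition of N with a, b orthogonal to 1_n and N_0 ∈ S_n of weight 0. Then n²·(wt N), n²·a_j and n²·b_j are integers for all j, and they satisfy the quadratic equation n⁴·(wt M) = n·(n²·wt N)² + Σ_{j=1}^n (n²·a_j)·(n²·b_j). -/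
/-!
Write `rᵢ`, `cⱼ` for the row and column sums of `N` and `T` for the sum of all its entries.
As `n² wt N = T`, summing the decomposition along rows and along columns gives
`n² aᵢ = n rᵢ - T` and `n² bⱼ = n cⱼ - T`, all integers. The entries of `N²` add up to `∑ₖ cₖ rₖ`, and since
`∑ rₖ = ∑ cₖ = T`, expanding `∑ⱼ (n rⱼ - T)(n cⱼ - T)` gives `n² ∑ₖ cₖ rₖ - n T²`.
-/

open Matrix Finset

noncomputable def wt {n : ℕ} (M : Matrix (Fin n) (Fin n) ℝ) : ℝ :=
  (1 / (n : ℝ) ^ 2) * ∑ i, ∑ j, M i j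

def En (n : ℕ) : Matrix (Fin n) (Fin n) ℝ := Matrix.of fun _ _ => 1

theorem Matrix.sum_sum_mul_apply {l m o R : Type*} [Fintype l] [Fintype m] [Fintype o]
    [NonUnitalNonAssocSemiring R] (A : Matrix l m R) (B : Matrix m o R) :
    ∑ i, ∑ j, (A * B) i j = ∑ k, (∑ i, A i k) * ∑ j, B k j := by
  simp only [mul_apply, Finset.sum_mul, Finset.mul_sum]
  rw [Finset.sum_comm]
  exact (Finset.sum_congr rfl fun _ _ => Finset.sum_comm).trans Finset.sum_comm

theorem sum_sub_mul_sub_of_sum_eq {ι R : Type*} [Fintype ι] [CommRing R] (r c : ι → R) (T : R)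
    (hr : ∑ k, r k = T) (hc : ∑ k, c k = T) :
    ∑ k, (Fintype.card ι * r k - T) * (Fintype.card ι * c k - T) =
      (Fintype.card ι : R) ^ 2 * ∑ k, r k * c k - Fintype.card ι * T ^ 2 := by
  have expand : ∀ k, (Fintype.card ι * r k - T) * (Fintype.card ι * c k - T) =
      (Fintype.card ι : R) ^ 2 * (r k * c k) - Fintype.card ι * T * c k
        - Fintype.card ι * T * r k + T ^ 2 := fun k => by ring
  simp only [expand, Finset.sum_add_distrib, Finset.sum_sub_distrib, ← Finset.mul_sum, hr, hc,
    Finset.sum_const, Finset.card_univ, nsmul_eq_mul]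
  ring

theorem sq_mul_wt_eq_sum {n : ℕ} (M : Matrix (Fin n) (Fin n) ℝ) :
    (n : ℝ) ^ 2 * wt M = ∑ i, ∑ j, M i j := by
  rcases eq_or_ne n 0 with rfl | hn
  · simp
  · rw [wt, ← mul_assoc, mul_one_div_cancel (by positivity), one_mul]

theorem IsTypeS.sum_eq_zero_of_wt_eq_zero {n : ℕ} {M : Matrix (Fin n) (Fin n) ℝ}
    (hM : IsTypeS M) (hw : wt M = 0) :
    (∀ i, ∑ j, M i j = 0) ∧ ∀ j, ∑ i, M i j = 0 := by
  obtain ⟨w, hrow, hcol⟩ := hM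
  have hsum : (n : ℝ) * (n * w) = 0 := by
    simpa [hw, hrow] using sq_mul_wt_eq_sum M
  have hnw : (n : ℝ) * w = 0 := by
    rcases mul_eq_zero.mp hsum with h | h
    · simp [h]
    · exact h
  exact ⟨fun i => (hrow i).trans hnw, fun j => (hcol j).trans hnw⟩

section Decomposition

variable {n : ℕ} {A N0 : Matrix (Fin n) (Fin n) ℝ} {a b : Fin n → ℝ} {W : ℝ}

theorem row_sum_eq_of_decomposition
    (hdec : A = vecMulVec a (fun _ => 1) + vecMulVec (fun _ => 1) b + N0 + W • En n)
    (hb : ∑ j, b j = 0) (hN0 : ∀ i, ∑ j, N0 i j = 0) (i : Fin n) :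
    ∑ j, A i j = n * a i + n * W := by
  simp [hdec, En, vecMulVec_apply, Finset.sum_add_distrib, hb, hN0]

theorem col_sum_eq_of_decomposition
    (hdec : A = vecMulVec a (fun _ => 1) + vecMulVec (fun _ => 1) b + N0 + W • En n)
    (ha : ∑ i, a i = 0) (hN0 : ∀ j, ∑ i, N0 i j = 0) (j : Fin n) :
    ∑ i, A i j = n * b j + n * W := by
  simp [hdec, En, vecMulVec_apply, Finset.sum_add_distrib, ha, hN0]

end Decomposition

/-- Quadratic form obstruction for `M = N²` with integer matrices: `n² wt N`, the
`n² aⱼ` and the `n² bⱼ` are integers satisfying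
`n⁴ wt M = n (n² wt N)² + ∑ⱼ (n² aⱼ)(n² bⱼ)`. -/
theorem quadratic_obstruction_square {n : ℕ}
    (M N : Matrix (Fin n) (Fin n) ℤ) (hfact : M = N * N)
    (a b : Fin n → ℝ) (N0 : Matrix (Fin n) (Fin n) ℝ)
    (ha : ∑ i, a i = 0) (hb : ∑ i, b i = 0)
    (hN0 : IsTypeS N0) (hN0w : wt N0 = 0)
    (hdec : N.map (Int.cast : ℤ → ℝ) =
      vecMulVec a (fun _ => 1) + vecMulVec (fun _ => 1) b + N0 +
        wt (N.map (Int.cast : ℤ → ℝ)) • En n) :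
    (∃ z : ℤ, (n : ℝ) ^ 2 * wt (N.map (Int.cast : ℤ → ℝ)) = z) ∧
    (∀ j, ∃ z : ℤ, (n : ℝ) ^ 2 * a j = z) ∧
    (∀ j, ∃ z : ℤ, (n : ℝ) ^ 2 * b j = z) ∧
    (n : ℝ) ^ 4 * wt (M.map (Int.cast : ℤ → ℝ)) =
      n * ((n : ℝ) ^ 2 * wt (N.map (Int.cast : ℤ → ℝ))) ^ 2 +
        ∑ j, ((n : ℝ) ^ 2 * a j) * ((n : ℝ) ^ 2 * b j) := by
  set A := N.map (Int.cast : ℤ → ℝ)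
  obtain ⟨hrow0, hcol0⟩ := hN0.sum_eq_zero_of_wt_eq_zero hN0w
  have hT : (n : ℝ) ^ 2 * wt A = ∑ i, ∑ j, A i j := sq_mul_wt_eq_sum A
  have hna : ∀ i, (n : ℝ) ^ 2 * a i = n * ∑ j, A i j - ∑ i, ∑ j, A i j := fun i => by
    rw [row_sum_eq_of_decomposition hdec hb hrow0, ← hT]; ring
  have hnb : ∀ j, (n : ℝ) ^ 2 * b j = n * ∑ i, A i j - ∑ i, ∑ j, A i j := fun j => by
    rw [col_sum_eq_of_decomposition hdec ha hcol0, ← hT]; ring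
  have hM : M.map (Int.cast : ℤ → ℝ) = A * A := by
    rw [hfact]; exact Matrix.map_mul (f := Int.castRingHom ℝ)
  refine ⟨⟨∑ i, ∑ j, N i j, by simp [hT, A]⟩,
    fun i => ⟨n * ∑ j, N i j - ∑ i, ∑ j, N i j, by simp [hna i, A]⟩,
    fun j => ⟨n * ∑ i, N i j - ∑ i, ∑ j, N i j, by simp [hnb j, A]⟩, ?_⟩
  have hquad := sum_sub_mul_sub_of_sum_eq (fun k => ∑ j, A k j) (fun k => ∑ i, A i k)
    (∑ i, ∑ j, A i j) rfl Finset.sum_comm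
  simp only [Fintype.card_fin] at hquad
  calc (n : ℝ) ^ 4 * wt (M.map (Int.cast : ℤ → ℝ)) = n ^ 2 * (n ^ 2 * wt (A * A)) := by
        rw [hM]; ring
    _ = n ^ 2 * ∑ k, (∑ j, A k j) * ∑ i, A i k := by
        rw [sq_mul_wt_eq_sum, sum_sum_mul_apply]
        exact congrArg _ (Finset.sum_congr rfl fun _ _ => mul_comm _ _)
    _ = _ := by
        simp only [hT, hna, hnb, hquad]
        ring
end
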